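/- arXiv:1601.07856 — 2 statements merged into one kernel-verified Lean document; each statement's English description precedes it below -/
import Mathlib

section
/- Let H be a finite simple graph, n ≥ 5 odd, f : C_n → H a graph homomorphism, and let i be an integer with 1 ≤ i ≤ n−2 and f(i−1) = f(i+1). Define f' : ZMod (n−2) → V(H) by f'(j) = f(j) for 0 ≤ j ≤ i−1 and f'(j) = f(j+2) for i ≤ j ≤ n−3 (on integer representatives). Then f' is a graph homomorphism from C_{n−2} to H and σ₁(f') = σ₁(f) in 𝒢₁(H). -/
/-- The type of arcs of a simple graph: ordered pairs of adjacent vertices. -/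
abbrev Arc {V : Type} (H : SimpleGraph V) : Type := {p : V × V // H.Adj p.1 p.2}

/-- The relators `(a,b)(c,b)⁻¹(c,d)(a,d)⁻¹` over all 4-cycles `(a,b,c,d)` of `H`. -/
def relators1 {V : Type} (H : SimpleGraph V) : Set (FreeGroup (Arc H)) :=
  {r | ∃ (a b c d : V) (hab : H.Adj a b) (hcb : H.Adj c b) (hcd : H.Adj c d) (had : H.Adj a d),
    r = FreeGroup.of ⟨(a, b), hab⟩ * (FreeGroup.of ⟨(c, b), hcb⟩)⁻¹ *
        FreeGroup.of ⟨(c, d), hcd⟩ * (FreeGroup.of ⟨(a, d), had⟩)⁻¹}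

/-- The group `𝒢₁(H)`, presented by the arcs with the 4-cycle relators. -/
abbrev G1 {V : Type} (H : SimpleGraph V) := PresentedGroup (relators1 H)

/-- `f : ZMod n → V` is a homomorphism from the cycle `C_n` to `H`. -/
def IsCycleHom {V : Type} (H : SimpleGraph V) (n : ℕ) (f : ZMod n → V) : Prop :=
  ∀ i : ZMod n, H.Adj (f i) (f (i + 1))

/-- The signature `σ₁(f) = ∏_{i=0}^{n-1} (f(2i),f(2i+1))·(f(2i+2),f(2i+1))⁻¹ ∈ 𝒢₁(H)`,
the product being taken from left to right. -/
def sig1 {V : Type} (H : SimpleGraph V) (n : ℕ) (f : ZMod n → V) (hf : IsCycleHom H n f) :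
    G1 H :=
  ((List.range n).map (fun k =>
    PresentedGroup.of (rels := relators1 H)
        ⟨(f (2 * (k : ZMod n)), f (2 * (k : ZMod n) + 1)), hf _⟩ *
    (PresentedGroup.of (rels := relators1 H)
        ⟨(f (2 * (k : ZMod n) + 1 + 1), f (2 * (k : ZMod n) + 1)), (hf _).symm⟩)⁻¹)).prod

/-- The cycle graph on `ZMod n` (`i` adjacent to `i ± 1`). -/
def cyc (n : ℕ) : SimpleGraph (ZMod n) := SimpleGraph.fromRel (fun i j => j = i + 1)

/-- Adjacency for the generalized Mycielskian. -/
def mycAdj {W : Type} (G : SimpleGraph W) (q : ℕ) :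
    (W × Fin q) ⊕ Unit → (W × Fin q) ⊕ Unit → Prop
  | Sum.inl (u, i), Sum.inl (v, j) =>
      G.Adj u v ∧ ((i : ℕ) + 1 = (j : ℕ) ∨ (j : ℕ) + 1 = (i : ℕ) ∨ ((i : ℕ) = 0 ∧ (j : ℕ) = 0))
  | Sum.inl (u, i), Sum.inr _ => (i : ℕ) = q - 1 ∧ ∃ v, G.Adj u v
  | Sum.inr _, Sum.inl (u, i) => (i : ℕ) = q - 1 ∧ ∃ v, G.Adj u v
  | Sum.inr _, Sum.inr _ => False

/-- The generalized Mycielskian `M_q(G)`: levels `0,…,q-1` of `G` plus an apex `*`. -/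
def Myc {W : Type} (G : SimpleGraph W) (q : ℕ) : SimpleGraph ((W × Fin q) ⊕ Unit) where
  Adj := mycAdj G q
  symm := by
    constructor
    rintro (⟨u, i⟩ | ⟨⟩) (⟨v, j⟩ | ⟨⟩) h <;> simp only [mycAdj] at h ⊢
    · exact ⟨h.1.symm, by tauto⟩
    · exact h
    · exact h
  loopless := by
    constructor
    rintro (⟨u, i⟩ | ⟨⟩) h <;> simp only [mycAdj] at h
    exact G.loopless.irrefl u h.1

/-! σ₁(f) is the product of the 2n signed arc generators along the doubled closed walk
f(0), f(1), …, f(2n): the arc at an even position enters positively, the reversed arc at an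
odd position enters inverted. A spur f(i-1) = f(i+1) makes the two factors at positions i-1 and
i cancel, and it recurs at positions n+i-1 and n+i. Deleting both cancelling pairs shifts the
later factors by two, which preserves their signs, and what remains is the doubled walk of f'. -/

section Walks

variable {V : Type} (H : SimpleGraph V)

open Classical in
/-- The generator of `𝒢₁(H)` of an arc, with the junk value `1` on non-adjacent pairs, so that
products along a walk can be rearranged without carrying adjacency proofs. -/
noncomputable def arcElem (u v : V) : G1 H :=
  if h : H.Adj u v then PresentedGroup.of ⟨(u, v), h⟩ else 1

noncomputable def walkStep (a : ℕ → V) (m : ℕ) : G1 H :=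
  if Even m then arcElem H (a m) (a (m + 1)) else (arcElem H (a (m + 1)) (a m))⁻¹

noncomputable def walkSig (a : ℕ → V) (L : ℕ) : G1 H :=
  ((List.range L).map (walkStep H a)).prod

variable {H}

theorem walkSig_succ (a : ℕ → V) (L : ℕ) :
    walkSig H a (L + 1) = walkSig H a L * walkStep H a L := by
  simp [walkSig, List.range_succ]

theorem walkSig_two_mul (a : ℕ → V) (n : ℕ) :
    walkSig H a (2 * n) =
      ((List.range n).map fun k => walkStep H a (2 * k) * walkStep H a (2 * k + 1)).prod := by
  induction n with
  | zero => rfl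
  | succ n ih =>
    rw [Nat.mul_succ, walkSig_succ, walkSig_succ, ih, List.range_succ, List.map_append,
      List.prod_append, List.map_singleton, List.prod_singleton, mul_assoc]

theorem walkSig_congr {a b : ℕ → V} {L : ℕ} (h : ∀ m ≤ L, a m = b m) :
    walkSig H a L = walkSig H b L := by
  refine congrArg List.prod (List.map_congr_left fun m hm => ?_)
  rw [List.mem_range] at hm
  simp only [walkStep, h m hm.le, h (m + 1) hm]

theorem walkStep_mul_walkStep_succ {a : ℕ → V} {m : ℕ} (hspur : a (m + 2) = a m) :
    walkStep H a m * walkStep H a (m + 1) = 1 := by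
  rcases Nat.even_or_odd m with hm | hm
  · simp [walkStep, hm, Nat.even_add_one, hspur]
  · simp [walkStep, Nat.not_even_iff_odd.2 hm, hm, hspur]

end Walks

section Contraction

variable {V : Type}

def contractSpur (a : ℕ → V) (p : ℕ) (m : ℕ) : V :=
  if m < p then a m else a (m + 2)

variable {a : ℕ → V} {p m : ℕ}

theorem contractSpur_of_lt (hm : m < p) : contractSpur a p m = a m := if_pos hm

theorem contractSpur_of_ge (hm : p ≤ m) : contractSpur a p m = a (m + 2) :=
  if_neg (Nat.not_lt.2 hm)

theorem contractSpur_of_le (hspur : a (p + 2) = a p) (hm : m ≤ p) : contractSpur a p m = a m := by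
  rcases hm.lt_or_eq with hm | rfl
  · exact contractSpur_of_lt hm
  · exact (contractSpur_of_ge le_rfl).trans hspur

theorem contractSpur_adj {H : SimpleGraph V} (ha : ∀ m, H.Adj (a m) (a (m + 1)))
    (hspur : a (p + 2) = a p) (m : ℕ) :
    H.Adj (contractSpur a p m) (contractSpur a p (m + 1)) := by
  rcases Nat.lt_or_ge m p with hm | hm
  · rw [contractSpur_of_lt hm, contractSpur_of_le hspur hm]
    exact ha m
  · rw [contractSpur_of_ge hm, contractSpur_of_ge (by omega)]
    exact ha (m + 2)

theorem walkStep_contractSpur_of_ge (H : SimpleGraph V) (hm : p ≤ m) :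
    walkStep H (contractSpur a p) m = walkStep H a (m + 2) := by
  simp only [walkStep, contractSpur_of_ge hm, contractSpur_of_ge (hm.trans m.le_succ),
    Nat.even_add, even_two, iff_true, add_right_comm m 1 2]

theorem walkSig_contractSpur (H : SimpleGraph V) (hspur : a (p + 2) = a p) {L : ℕ}
    (hL : p ≤ L) : walkSig H (contractSpur a p) L = walkSig H a (L + 2) := by
  induction L, hL using Nat.le_induction with
  | base =>
    rw [walkSig_congr fun m hm => contractSpur_of_le hspur hm, walkSig_succ, walkSig_succ,
      mul_assoc, walkStep_mul_walkStep_succ hspur, mul_one]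
  | succ L hL ih =>
    rw [walkSig_succ, ih, walkStep_contractSpur_of_ge H hL, ← walkSig_succ]

variable {N : ℕ}

theorem contractSpur_contractSpur_eq_mod (hper : ∀ m, a (m + (N + 2)) = a m)
    (hspur : a (p + 2) = a p) (hp : p < N) (hm : m ≤ 2 * N) :
    contractSpur (contractSpur a p) (N + p) m = contractSpur a p (m % N) := by
  rcases Nat.lt_or_ge m N with h₁ | h₁
  · rw [contractSpur_of_lt (by omega), Nat.mod_eq_of_lt h₁]
  have hmod : m % N = m - N ∨ m = 2 * N := by
    rcases hm.lt_or_eq with h | h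
    · exact .inl (by rw [Nat.mod_eq_sub_mod h₁, Nat.mod_eq_of_lt (by omega)])
    · exact .inr h
  rcases Nat.lt_or_ge m (N + p) with h₂ | h₂
  · rw [contractSpur_of_lt h₂, contractSpur_of_ge (by omega), hmod.resolve_right (by omega),
      contractSpur_of_lt (by omega), ← hper (m - N), show m - N + (N + 2) = m + 2 by omega]
  rw [contractSpur_of_ge h₂, contractSpur_of_ge (by omega)]
  rcases hmod with hmod | rfl
  · rw [hmod, contractSpur_of_ge (by omega), ← hper (m - N + 2),
      show m - N + 2 + (N + 2) = m + 2 + 2 by omega]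
  · rw [Nat.mul_mod_left, contractSpur_of_le hspur (Nat.zero_le p), ← hper 0,
      ← hper (0 + (N + 2)), show 0 + (N + 2) + (N + 2) = 2 * N + 2 + 2 by omega]

end Contraction

section Cycles

variable {V : Type} {H : SimpleGraph V}

theorem sig1_eq_walkSig {n : ℕ} (f : ZMod n → V) (hf : IsCycleHom H n f) :
    sig1 H n f hf = walkSig H (fun m : ℕ => f m) (2 * n) := by
  rw [walkSig_two_mul]
  unfold sig1
  simp only [bind_pure_comp, List.map_eq_map, List.map_map]
  refine congrArg List.prod (List.map_congr_left fun k _ => ?_)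
  simp [walkStep, arcElem, hf _, (hf _).symm]

theorem sig1_contractSpur {N p : ℕ} (hp : p < N)
    (f : ZMod (N + 2) → V) (hf : IsCycleHom H (N + 2) f) (hspur : f ↑(p + 2) = f ↑p)
    (g : ZMod N → V) (hg : ∀ j : ZMod N, g j = contractSpur (fun m : ℕ => f m) p j.val) :
    ∃ hg' : IsCycleHom H N g, sig1 H N g hg' = sig1 H (N + 2) f hf := by
  have : NeZero N := ⟨by omega⟩
  set a : ℕ → V := fun m => f m
  have hper : ∀ m, a (m + (N + 2)) = a m := by simp [a]
  have ha : ∀ m, H.Adj (a m) (a (m + 1)) := fun m => by simpa [a] using hf m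
  have hspur' : contractSpur a p (N + p + 2) = contractSpur a p (N + p) := by
    rw [contractSpur_of_ge (by omega), contractSpur_of_ge (by omega),
      show N + p + 2 + 2 = p + 2 + (N + 2) by omega, show N + p + 2 = p + (N + 2) by omega, hper,
      hper]
    exact hspur
  have hd : ∀ m ≤ 2 * N, g m = contractSpur (contractSpur a p) (N + p) m := fun m hm => by
    rw [hg, ZMod.val_natCast, contractSpur_contractSpur_eq_mod hper hspur (by omega) hm]
  have hg' : IsCycleHom H N g := fun j => by
    have hadj := contractSpur_adj (contractSpur_adj ha hspur) hspur' j.val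
    have hj := j.val_lt
    rwa [← hd _ (by omega), ← hd _ (by omega), Nat.cast_add, ZMod.natCast_zmod_val,
      Nat.cast_one] at hadj
  refine ⟨hg', ?_⟩
  rw [sig1_eq_walkSig, sig1_eq_walkSig, walkSig_congr hd, show 2 * (N + 2) = 2 * N + 2 + 2 by ring,
    walkSig_contractSpur H hspur' (by omega), walkSig_contractSpur H hspur (by omega)]

end Cycles

theorem sig1_spur_contraction_general {V : Type} (H : SimpleGraph V)
    (n : ℕ)
    (f : ZMod n → V) (hf : IsCycleHom H n f)
    (i : ℕ) (hi1 : 1 ≤ i) (hi2 : i ≤ n - 2)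
    (hspur : f ((i - 1 : ℕ) : ZMod n) = f ((i + 1 : ℕ) : ZMod n))
    (f' : ZMod (n - 2) → V)
    (hf'def : ∀ j : ZMod (n - 2),
      (j.val ≤ i - 1 → f' j = f ((j.val : ℕ) : ZMod n)) ∧
      (i ≤ j.val → f' j = f ((j.val + 2 : ℕ) : ZMod n))) :
    ∃ hf' : IsCycleHom H (n - 2) f', sig1 H (n - 2) f' hf' = sig1 H n f hf := by
  obtain ⟨N, rfl⟩ : ∃ N, n = N + 2 := ⟨n - 2, by omega⟩
  obtain ⟨p, rfl⟩ : ∃ p, i = p + 1 := ⟨i - 1, by omega⟩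
  refine sig1_contractSpur (by omega) f hf hspur.symm f' fun j => ?_
  rcases Nat.lt_or_ge p j.val with hj | hj
  · rw [(hf'def j).2 hj, contractSpur_of_ge hj.le]
  · rw [(hf'def j).1 hj, contractSpur_of_le hspur.symm hj]

/-- Contracting a "spur" of an odd cycle (a vertex `i` with
`f(i-1) = f(i+1)`) yields a homomorphism `f' : C_{n-2} → H` with the same signature. -/
theorem sig1_spur_contraction {V : Type} [Fintype V] (H : SimpleGraph V)
    (n : ℕ) (hodd : Odd n) (h5 : 5 ≤ n)
    (f : ZMod n → V) (hf : IsCycleHom H n f)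
    (i : ℕ) (hi1 : 1 ≤ i) (hi2 : i ≤ n - 2)
    (hspur : f ((i - 1 : ℕ) : ZMod n) = f ((i + 1 : ℕ) : ZMod n))
    (f' : ZMod (n - 2) → V)
    (hf'def : ∀ j : ZMod (n - 2),
      (j.val ≤ i - 1 → f' j = f ((j.val : ℕ) : ZMod n)) ∧
      (i ≤ j.val → f' j = f ((j.val + 2 : ℕ) : ZMod n))) :
    ∃ hf' : IsCycleHom H (n - 2) f', sig1 H (n - 2) f' hf' = sig1 H n f hf :=
  sig1_spur_contraction_general H n f hf i hi1 hi2 hspur f' hf'def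
end

section
/- Let H be a finite connected simple graph. The following are equivalent: (a) there exist an odd n ≥ 3 and a graph homomorphism f : C_n → H with σ₂(f) = 0 in 𝒢₂(H); (b) there exists a map X : A(H) → ZMod 2 such that: for every vertex u of H, Σ_{v adjacent to u} (X(u,v) + X(v,u)) = 0; Σ_{(u,v) ∈ A(H)} X(u,v) = 1; and Σ_{(u,v) ∈ A(H)} (X(u,v) + X(v,u))·[(u,v)] = 0 in 𝒢₂(H), where [(u,v)] denotes the image of the basis vector (u,v) in 𝒢₂(H). -/
/-- The free `ZMod 2`-vector space on the arcs of `H`. -/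
abbrev ArcSpace {V : Type} (H : SimpleGraph V) := Arc H →₀ ZMod 2

/-- The relator vectors `(a,b)+(c,b)+(c,d)+(a,d)` over all 4-cycles `(a,b,c,d)` of `H`. -/
def relators2 {V : Type} (H : SimpleGraph V) : Set (ArcSpace H) :=
  {r | ∃ (a b c d : V) (hab : H.Adj a b) (hcb : H.Adj c b) (hcd : H.Adj c d) (had : H.Adj a d),
    r = Finsupp.single ⟨(a, b), hab⟩ 1 + Finsupp.single ⟨(c, b), hcb⟩ 1 +
        Finsupp.single ⟨(c, d), hcd⟩ 1 + Finsupp.single ⟨(a, d), had⟩ 1}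

/-- `𝒢₂(H)`: the quotient of the free `ZMod 2`-vector space on `A(H)` by the span of the
4-cycle relators. -/
abbrev G2 {V : Type} (H : SimpleGraph V) :=
  ArcSpace H ⧸ Submodule.span (ZMod 2) (relators2 H)

/-- The class of the basis vector corresponding to an arc, in `𝒢₂(H)`. -/
noncomputable def arcClass {V : Type} (H : SimpleGraph V) (a : Arc H) : G2 H :=
  Submodule.Quotient.mk (Finsupp.single a 1)

/-- The signature `σ₂(f) = Σ_{i=0}^{n-1} [(f(2i),f(2i+1)) + (f(2i+2),f(2i+1))] ∈ 𝒢₂(H)`. -/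
noncomputable def sig2 {V : Type} (H : SimpleGraph V) (n : ℕ) (f : ZMod n → V) (hf : IsCycleHom H n f) :
    G2 H :=
  ∑ k ∈ Finset.range n,
    (arcClass H ⟨(f (2 * (k : ZMod n)), f (2 * (k : ZMod n) + 1)), hf _⟩ +
     arcClass H ⟨(f (2 * (k : ZMod n) + 1 + 1), f (2 * (k : ZMod n) + 1)), (hf _).symm⟩)

noncomputable instance {V : Type} [Fintype V] (H : SimpleGraph V) : Fintype (Arc H) := by
  classical exact Subtype.fintype _

/-!
For odd `n`, doubling is a bijection of `ZMod n`, so `σ₂(f)` is the sum of the edge classes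
`[(u,v)] + [(v,u)]` over the steps of the closed walk `f`. Counting modulo `2` how often each
arc is traversed turns an odd closed walk with `σ₂ = 0` into a solution `X`: the walk leaves
each vertex as often as it enters it, and it has odd length.

Conversely, given a solution `X`, fix walks `b ⤳ x` from a base point and traverse, for every
arc `a = (x, y)` with `X a = 1`, the closed walk `b ⤳ x → y ⤳ b`. By the flow condition every
connecting walk is used an even number of times, so the concatenation has odd length and its sum
of edge classes is `Σ X(a) ([(x,y)] + [(y,x)]) = 0`.
-/

open Finset

section Sums

variable {M : Type*} [AddCommMonoid M]

lemma sum_range_natCast_zmod (n : ℕ) [NeZero n] (g : ZMod n → M) :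
    ∑ k ∈ range n, g (k : ZMod n) = ∑ j : ZMod n, g j := by
  refine sum_nbij' (fun k => (k : ZMod n)) ZMod.val (by simp) (fun j _ => by simp [ZMod.val_lt j])
    (fun k hk => ZMod.val_cast_of_lt (mem_range.mp hk)) (fun j _ => ZMod.natCast_zmod_val j)
    (fun _ _ => rfl)

lemma sum_zmod_two_mul {n : ℕ} [NeZero n] (hn : Odd n) (g : ZMod n → M) :
    ∑ j : ZMod n, g (2 * j) = ∑ j : ZMod n, g j := by
  have h2 : IsUnit (2 : ZMod n) := by
    simpa using (ZMod.isUnit_iff_coprime 2 n).mpr (Nat.coprime_two_left.mpr hn)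
  exact Equiv.sum_comp (Units.mulLeft h2.unit) g

variable [Module (ZMod 2) M] {α ι : Type*} [Fintype α] [Fintype ι]

lemma sum_filter_eq_one_eq_sum_smul (X : α → ZMod 2) (t : α → M) :
    ∑ a with X a = 1, t a = ∑ a, X a • t a := by
  rw [sum_filter]
  refine sum_congr rfl fun a _ => ?_
  rcases (by decide : ∀ x : ZMod 2, x = 0 ∨ x = 1) (X a) with h | h <;> simp [h]

variable [DecidableEq α]

def parityCount (s : ι → α) (a : α) : ZMod 2 := #{i | s i = a}

lemma sum_parityCount_smul (s : ι → α) (t : α → M) :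
    ∑ a, parityCount s a • t a = ∑ i, t (s i) := by
  simp only [parityCount, Nat.cast_smul_eq_nsmul, ← sum_const]
  exact sum_fiberwise' univ s t

end Sums

namespace Arc

variable {V : Type} {H : SimpleGraph V}

def rev (a : Arc H) : Arc H := ⟨(a.val.2, a.val.1), a.prop.symm⟩

@[simp]
lemma rev_rev (a : Arc H) : a.rev.rev = a := rfl

lemma rev_involutive : Function.Involutive (rev : Arc H → Arc H) := rev_rev

lemma sum_add_rev_smul [Fintype V] {R M : Type*} [Semiring R] [AddCommMonoid M] [Module R M]
    (X : Arc H → R) (t : Arc H → M) :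
    ∑ a, (X a + X a.rev) • t a = ∑ a, X a • (t a + t a.rev) := by
  have hrev : ∑ a, X a.rev • t a = ∑ a, X a • t a.rev :=
    (Equiv.sum_comp rev_involutive.toPerm fun a => X a.rev • t a).symm
  simp only [add_smul, smul_add, sum_add_distrib, hrev]

end Arc

noncomputable def edgeClass {V : Type} (H : SimpleGraph V) (a : Arc H) : G2 H :=
  arcClass H a + arcClass H a.rev

lemma edgeClass_rev {V : Type} (H : SimpleGraph V) (a : Arc H) :
    edgeClass H a.rev = edgeClass H a :=
  add_comm _ _

lemma sum_smul_edgeClass {V : Type} [Fintype V] {H : SimpleGraph V} (X : Arc H → ZMod 2) :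
    ∑ a, X a • edgeClass H a = ∑ a, (X a - X a.rev) • arcClass H a := by
  simp only [CharTwo.sub_eq_add, Arc.sum_add_rev_smul]
  rfl

namespace SimpleGraph.Walk

variable {V : Type} {H : SimpleGraph V} {M : Type*} [AddCommMonoid M]

def arcSum (φ : Arc H → M) {u v : V} (w : H.Walk u v) : M :=
  (w.darts.map fun d => φ ⟨d.toProd, d.adj⟩).sum

variable (φ : Arc H → M)

@[simp]
lemma arcSum_cons {u v w : V} (h : H.Adj u v) (p : H.Walk v w) :
    (cons h p).arcSum φ = φ ⟨(u, v), h⟩ + p.arcSum φ := rfl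

@[simp]
lemma arcSum_append {u v w : V} (p : H.Walk u v) (q : H.Walk v w) :
    (p.append q).arcSum φ = p.arcSum φ + q.arcSum φ := by
  simp [arcSum]

lemma arcSum_reverse (hφ : ∀ a, φ a.rev = φ a) {u v : V} (p : H.Walk u v) :
    p.reverse.arcSum φ = p.arcSum φ := by
  simp only [arcSum, darts_reverse, List.map_reverse, List.sum_reverse, List.map_map]
  exact congrArg List.sum (List.map_congr_left fun d _ => hφ ⟨d.toProd, d.adj⟩)

lemma arcSum_const {u v : V} (c : M) (p : H.Walk u v) :
    p.arcSum (fun _ => c) = p.length • c := by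
  simp [arcSum]

lemma arcSum_foldr_append {b : V} (l : List (H.Walk b b)) :
    (l.foldr append nil).arcSum φ = (l.map (arcSum φ)).sum := by
  induction l with
  | nil => rfl
  | cons w l ih => simp [ih]

lemma length_ne_one {b : V} (p : H.Walk b b) : p.length ≠ 1 := by
  match p with
  | .nil => simp
  | .cons h .nil => exact (h.ne rfl).elim
  | .cons _ (.cons _ _) => simp

end SimpleGraph.Walk

namespace IsCycleHom

variable {V : Type} {H : SimpleGraph V} {n : ℕ} {f : ZMod n → V}

def arc (hf : IsCycleHom H n f) (j : ZMod n) : Arc H := ⟨(f j, f (j + 1)), hf j⟩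

lemma sig2_eq_sum_edgeClass [NeZero n] (hn : Odd n) (hf : IsCycleHom H n f) :
    sig2 H n f hf = ∑ j, edgeClass H (hf.arc j) := by
  let out : ZMod n → G2 H := fun i => arcClass H (hf.arc i)
  let back : ZMod n → G2 H := fun i => arcClass H (hf.arc (i + 1)).rev
  have hback : ∑ j, back j = ∑ j, arcClass H (hf.arc j).rev :=
    Equiv.sum_comp (Equiv.addRight 1) fun j => arcClass H (hf.arc j).rev
  calc sig2 H n f hf = ∑ j, (out (2 * j) + back (2 * j)) :=
        sum_range_natCast_zmod n fun j => out (2 * j) + back (2 * j)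
    _ = ∑ j, out j + ∑ j, back j := by
        rw [sum_add_distrib, sum_zmod_two_mul hn out, sum_zmod_two_mul hn back]
    _ = ∑ j, edgeClass H (hf.arc j) := by
        rw [hback, ← sum_add_distrib]; rfl

variable [Fintype V] [DecidableEq V] [NeZero n] (hf : IsCycleHom H n f)

lemma parityCount_arc_flow (u : V) :
    ∑ a : Arc H, (if a.val.1 = u then parityCount hf.arc a + parityCount hf.arc a.rev else 0)
      = 0 := by
  let δ : Arc H → ZMod 2 := fun a => if a.val.1 = u then 1 else 0
  have hvisits : ∑ j, δ (hf.arc j).rev = ∑ j, δ (hf.arc j) :=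
    Equiv.sum_comp (Equiv.addRight 1) fun j => δ (hf.arc j)
  calc _ = ∑ a, (parityCount hf.arc a + parityCount hf.arc a.rev) • δ a := by
        simp [δ]
    _ = ∑ j, δ (hf.arc j) + ∑ j, δ (hf.arc j).rev := by
        rw [Arc.sum_add_rev_smul, sum_parityCount_smul, sum_add_distrib]
    _ = 0 := by rw [hvisits, CharTwo.add_self_eq_zero]

lemma parityCount_arc_sum (hn : Odd n) : ∑ a : Arc H, parityCount hf.arc a = 1 := by
  simpa [ZMod.natCast_eq_one_iff_odd.mpr hn] using
    sum_parityCount_smul hf.arc fun _ => (1 : ZMod 2)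

lemma parityCount_arc_signature (hn : Odd n) :
    ∑ a : Arc H, (parityCount hf.arc a - parityCount hf.arc a.rev) • arcClass H a
      = sig2 H n f hf := by
  rw [← sum_smul_edgeClass, sum_parityCount_smul, hf.sig2_eq_sum_edgeClass hn]

end IsCycleHom

section Flow

variable {V : Type} [Fintype V] [DecidableEq V] {H : SimpleGraph V} (X : Arc H → ZMod 2)

lemma sum_smul_add_eq_zero_of_flow
    (hflow : ∀ u, ∑ a : Arc H, (if a.val.1 = u then X a + X a.rev else 0) = 0)
    {M : Type*} [AddCommMonoid M] [Module (ZMod 2) M] (t : V → M) :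
    ∑ a : Arc H, X a • (t a.val.1 + t a.val.2) = 0 := by
  calc _ = ∑ a : Arc H, (X a + X a.rev) • t a.val.1 :=
        (Arc.sum_add_rev_smul X fun a => t a.val.1).symm
    _ = ∑ u, (∑ a : Arc H, if a.val.1 = u then X a + X a.rev else 0) • t u := by
        simp only [sum_smul, ite_smul, zero_smul]
        rw [sum_comm]
        simp
    _ = 0 := by simp [hflow]

lemma exists_closed_walk_arcSum_eq (hconn : H.Connected)
    (hflow : ∀ u, ∑ a : Arc H, (if a.val.1 = u then X a + X a.rev else 0) = 0) :
    ∃ (b : V) (W : H.Walk b b), ∀ {M : Type} [AddCommMonoid M] [Module (ZMod 2) M]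
      (φ : Arc H → M), (∀ a, φ a.rev = φ a) → W.arcSum φ = ∑ a, X a • φ a := by
  obtain ⟨b⟩ := hconn.nonempty
  let path (x : V) : H.Walk b x := (hconn.preconnected b x).some
  let loop (a : Arc H) : H.Walk b b :=
    (path a.val.1).append (.cons a.prop (path a.val.2).reverse)
  refine ⟨b, ({a | X a = 1} : Finset (Arc H)).toList.map loop |>.foldr .append .nil,
    fun φ hφ => ?_⟩
  have hloop (a : Arc H) : (loop a).arcSum φ
      = φ a + ((path a.val.1).arcSum φ + (path a.val.2).arcSum φ) := by
    simp only [loop, SimpleGraph.Walk.arcSum_append, SimpleGraph.Walk.arcSum_cons,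
      SimpleGraph.Walk.arcSum_reverse φ hφ]
    abel
  rw [SimpleGraph.Walk.arcSum_foldr_append, List.map_map, sum_map_toList,
    sum_filter_eq_one_eq_sum_smul]
  simp only [Function.comp_apply, hloop, smul_add (X _) (φ _), sum_add_distrib,
    sum_smul_add_eq_zero_of_flow X hflow fun x => (path x).arcSum φ, add_zero]

end Flow

lemma SimpleGraph.Walk.exists_isCycleHom {V : Type} {H : SimpleGraph V} {b : V}
    (W : H.Walk b b) [NeZero W.length] :
    ∃ (f : ZMod W.length → V) (hf : IsCycleHom H W.length f), ∀ {M : Type} [AddCommMonoid M]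
      (φ : Arc H → M), ∑ j, φ (hf.arc j) = W.arcSum φ := by
  let f (j : ZMod W.length) : V := W.getVert j.val
  have hf_natCast {k : ℕ} (hk : k ≤ W.length) : f k = W.getVert k := by
    rcases hk.lt_or_eq with hk | rfl
    · simp [f, ZMod.val_cast_of_lt hk]
    · simp [f]
  have hf_succ (j : ZMod W.length) : f (j + 1) = W.getVert (j.val + 1) := by
    rw [← hf_natCast j.val_lt, Nat.cast_succ, ZMod.natCast_zmod_val]
  have hf : IsCycleHom H W.length f := fun j => hf_succ j ▸ W.adj_getVert_succ j.val_lt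
  refine ⟨f, hf, fun φ => ?_⟩
  rw [← sum_range_natCast_zmod, sum_range, arcSum, ← Fin.sum_univ_fun_getElem]
  refine Fintype.sum_equiv (finCongr W.length_darts.symm) _ _ fun i => ?_
  simp only [finCongr_apply, Fin.val_cast, darts_getElem_eq_getVert]
  congr 2
  exact Subtype.ext (Prod.ext (hf_natCast i.is_le')
    ((congrArg f (Nat.cast_succ _).symm).trans (hf_natCast i.is_lt)))

/-- For a finite connected simple graph `H`, the existence of an odd cycle with
`σ₂ = 0` is equivalent to the solvability of the flow/parity/signature system over `ZMod 2`. -/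
theorem odd_cycle_trivial_sig2_iff_system_solvable {V : Type} [Fintype V] [DecidableEq V]
    (H : SimpleGraph V) (hconn : H.Connected) :
    (∃ n : ℕ, Odd n ∧ 3 ≤ n ∧ ∃ (f : ZMod n → V) (hf : IsCycleHom H n f), sig2 H n f hf = 0)
      ↔
    (∃ X : Arc H → ZMod 2,
      -- flow constraint at every vertex `u`: Σ_{v ∈ N(u)} (X(u,v) + X(v,u)) = 0
      (∀ u : V,
        (∑ a : Arc H, if a.val.1 = u then X a + X ⟨(a.val.2, a.val.1), a.prop.symm⟩ else 0)
          = 0) ∧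
      -- parity constraint: Σ_{(u,v) ∈ A(H)} X(u,v) = 1
      (∑ a : Arc H, X a) = 1 ∧
      -- signature constraint: Σ_{(u,v) ∈ A(H)} (X(u,v) - X(v,u)) · [(u,v)] = 0 in 𝒢₂(H)
      (∑ a : Arc H, (X a - X ⟨(a.val.2, a.val.1), a.prop.symm⟩) • arcClass H a) = 0) := by
  constructor
  · rintro ⟨n, hn, -, f, hf, hsig⟩
    have : NeZero n := ⟨hn.pos.ne'⟩
    exact ⟨parityCount hf.arc, hf.parityCount_arc_flow, hf.parityCount_arc_sum hn,
      (hf.parityCount_arc_signature hn).trans hsig⟩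
  · rintro ⟨X, hflow, hparity, hsig⟩
    obtain ⟨b, W, hW⟩ := exists_closed_walk_arcSum_eq X hconn hflow
    have hodd : Odd W.length := by
      rw [← ZMod.natCast_eq_one_iff_odd, ← nsmul_one, ← W.arcSum_const, hW _ fun _ => rfl]
      simpa using hparity
    have : NeZero W.length := ⟨hodd.pos.ne'⟩
    obtain ⟨f, hf, hfW⟩ := W.exists_isCycleHom
    refine ⟨W.length, hodd, ?_, f, hf, ?_⟩
    · obtain ⟨k, hk⟩ := hodd
      have := W.length_ne_one
      omega
    · rw [hf.sig2_eq_sum_edgeClass hodd, hfW, hW _ (edgeClass_rev H), sum_smul_edgeClass]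
      exact hsig
end
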